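/- Let I be a totally ordered set with a smallest element and let A be a Banach algebra admitting a character φ. Then the upper triangular matrix Banach algebra UP(I,A) is strong pseudo-amenable if and only if A is strong pseudo-amenable and |I| = 1. -/

import Mathlib

noncomputable section

open ContinuousLinearMap NormedSpace

/-- The topological dual of a seminormed space `E` (the pre-2025 Mathlib `NormedSpace.Dual`). -/
abbrev NormedSpace.Dual (𝕜 : Type*) [NontriviallyNormedField 𝕜] (E : Type*) [SeminormedAddCommGroup E]
    [NormedSpace 𝕜 E] : Type _ :=
  E →L[𝕜] 𝕜

/-- A directed index system for nets. -/
structure DirSys : Type 1 where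
  ι : Type
  le : ι → ι → Prop
  refl : ∀ i, le i i
  trans : ∀ {i j k}, le i j → le j k → le i k
  nonempty : Nonempty ι
  directed : ∀ i j, ∃ k, le i k ∧ le j k

/-- Convergence of a net indexed by a directed system, in a (pseudo)metric space. -/
def DirSys.Tendsto (D : DirSys) {X : Type*} [PseudoMetricSpace X] (m : D.ι → X) (x : X) : Prop :=
  ∀ ε : ℝ, 0 < ε → ∃ i, ∀ j, D.le i j → dist (m j) x < ε

variable (A : Type*) [NonUnitalNormedRing A] [NormedSpace ℂ A]
  [IsScalarTower ℂ A A] [SMulCommClass ℂ A A]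

/-- The continuous bilinear forms on `A`, i.e. the dual space of the projective tensor
product `A ⊗̂ A`. -/
abbrev BilForms := A →L[ℂ] NormedSpace.Dual ℂ A

/-- The bidual `(A ⊗̂ A)**` of the projective tensor product, realized concretely as the
dual space of the space of continuous bilinear forms on `A` (the latter being canonically,
isometrically, the dual of `A ⊗̂ A`). -/
abbrev TensorBidual := NormedSpace.Dual ℂ (BilForms A)

/-- The bidual `A**` of `A`. -/
abbrev Bidual := NormedSpace.Dual ℂ (NormedSpace.Dual ℂ A)

variable {A}

/-- The elementary tensor `x ⊗ y`, viewed inside `(A ⊗̂ A)**` via the canonical isometric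
embedding of `A ⊗̂ A` into its bidual. -/
def elemT (x y : A) : TensorBidual A :=
  (ContinuousLinearMap.apply ℂ ℂ y).comp (ContinuousLinearMap.apply ℂ (NormedSpace.Dual ℂ A) x)

variable (A)

/-- The canonical isometric copy of `A ⊗̂ A` inside its bidual: the closure of the linear
span of the elementary tensors. -/
def ptp : Submodule ℂ (TensorBidual A) :=
  (Submodule.span ℂ {m : TensorBidual A | ∃ x y : A, m = elemT x y}).topologicalClosure

/-- The map `f ↦ f·a` on bilinear forms, `(f·a)(x,y) = f(ax, y)`; predual of the left
module action of `A` on `(A ⊗̂ A)**`. -/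
def leftBil (a : A) : BilForms A →L[ℂ] BilForms A :=
  (compL ℂ A A (NormedSpace.Dual ℂ A)).flip (ContinuousLinearMap.mul ℂ A a)

/-- The map `f ↦ a·f` on bilinear forms, `(a·f)(x,y) = f(x, ya)`; predual of the right
module action of `A` on `(A ⊗̂ A)**`. -/
def rightBil (a : A) : BilForms A →L[ℂ] BilForms A :=
  compL ℂ A (NormedSpace.Dual ℂ A) (NormedSpace.Dual ℂ A)
    ((compL ℂ A A ℂ).flip ((ContinuousLinearMap.mul ℂ A).flip a))

variable {A}

/-- The left module action `a · m` of `A` on `(A ⊗̂ A)**`, extending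
`a · (x ⊗ y) = (a x) ⊗ y`. -/
def tsmulL (a : A) (m : TensorBidual A) : TensorBidual A := m.comp (leftBil A a)

/-- The right module action `m · a` of `A` on `(A ⊗̂ A)**`, extending
`(x ⊗ y) · a = x ⊗ (y a)`. -/
def tsmulR (a : A) (m : TensorBidual A) : TensorBidual A := m.comp (rightBil A a)

variable (A)

/-- The adjoint `π_A* : A* → (A ⊗̂ A)*` of the product morphism `π_A`, namely
`(π_A* f)(x, y) = f (x y)`. -/
def piStar : NormedSpace.Dual ℂ A →L[ℂ] BilForms A :=
  ((compL ℂ A (A →L[ℂ] A) (NormedSpace.Dual ℂ A)).flip (ContinuousLinearMap.mul ℂ A)).comp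
    (compL ℂ A A ℂ)

variable {A}

/-- The second adjoint `π_A** : (A ⊗̂ A)** → A**` of the product morphism. -/
def piSS (m : TensorBidual A) : Bidual A := m.comp (piStar A)

variable (A)

/-- The map `f ↦ f·a` on `A*`, `(f·a)(x) = f(ax)`. -/
def dualROp (a : A) : NormedSpace.Dual ℂ A →L[ℂ] NormedSpace.Dual ℂ A :=
  (compL ℂ A A ℂ).flip (ContinuousLinearMap.mul ℂ A a)

/-- The map `f ↦ a·f` on `A*`, `(a·f)(x) = f(xa)`. -/
def dualLOp (a : A) : NormedSpace.Dual ℂ A →L[ℂ] NormedSpace.Dual ℂ A :=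
  (compL ℂ A A ℂ).flip ((ContinuousLinearMap.mul ℂ A).flip a)

variable {A}

/-- The product `a · Φ` of `a ∈ A` and `Φ ∈ A**`: `(a·Φ)(f) = Φ(f·a)`. -/
def bsmulL (a : A) (Φ : Bidual A) : Bidual A := Φ.comp (dualROp A a)

/-- The product `Φ · a` of `Φ ∈ A**` and `a ∈ A`: `(Φ·a)(f) = Φ(a·f)`. -/
def bsmulR (a : A) (Φ : Bidual A) : Bidual A := Φ.comp (dualLOp A a)

/-- The canonical isometric embedding of `A` into its bidual. -/
def inclB (a : A) : Bidual A := NormedSpace.inclusionInDoubleDual ℂ A a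

variable (A)

/-- A Banach algebra `A` is *strong pseudo-amenable* if there is a (not necessarily bounded)
net `(m_α)` in `(A ⊗̂ A)**` such that `a·m_α − m_α·a → 0` and
`a·π_A**(m_α) = π_A**(m_α)·a → a` for every `a ∈ A`. -/
def StrongPseudoAmenable : Prop :=
  ∃ (D : DirSys) (m : D.ι → TensorBidual A),
    (∀ a : A, D.Tendsto (fun α => tsmulL a (m α) - tsmulR a (m α)) 0) ∧
    (∀ (a : A) (α : D.ι), bsmulL a (piSS (m α)) = bsmulR a (piSS (m α))) ∧
    (∀ a : A, D.Tendsto (fun α => bsmulR a (piSS (m α))) (inclB a))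

/-- A Banach algebra `A` is *pseudo-amenable* if there is a (not necessarily bounded)
net `(m_α)` in `A ⊗̂ A` such that `a·m_α − m_α·a → 0` and `π_A(m_α)a → a` for every `a ∈ A`. -/
def PseudoAmenable : Prop :=
  ∃ (D : DirSys) (m : D.ι → TensorBidual A),
    (∀ α, m α ∈ ptp A) ∧
    (∀ a : A, D.Tendsto (fun α => tsmulL a (m α) - tsmulR a (m α)) 0) ∧
    (∀ a : A, D.Tendsto (fun α => bsmulR a (piSS (m α))) (inclB a))

/-- A Banach algebra `A` is *pseudo-contractible* if there is a net `(m_α)` in `A ⊗̂ A`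
such that `a·m_α = m_α·a` and `π_A(m_α)a → a` for every `a ∈ A`. -/
def PseudoContractible : Prop :=
  ∃ (D : DirSys) (m : D.ι → TensorBidual A),
    (∀ α, m α ∈ ptp A) ∧
    (∀ (a : A) (α : D.ι), tsmulL a (m α) = tsmulR a (m α)) ∧
    (∀ a : A, D.Tendsto (fun α => bsmulR a (piSS (m α))) (inclB a))

/-- A Banach algebra `A` is *amenable* if it has a bounded approximate diagonal: a bounded
net `(m_α)` in `A ⊗̂ A` such that `a·m_α − m_α·a → 0` and `π_A(m_α)a → a` for every `a ∈ A`. -/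
def AmenableBanachAlgebra : Prop :=
  ∃ (D : DirSys) (m : D.ι → TensorBidual A) (C : ℝ),
    (∀ α, m α ∈ ptp A) ∧
    (∀ α, ‖m α‖ ≤ C) ∧
    (∀ a : A, D.Tendsto (fun α => tsmulL a (m α) - tsmulR a (m α)) 0) ∧
    (∀ a : A, D.Tendsto (fun α => bsmulR a (piSS (m α))) (inclB a))

end

/-- A character on `A`: a nonzero multiplicative linear functional. -/
def IsCharacter (A : Type) [NonUnitalNormedRing A] [NormedSpace ℂ A] (φ : A →ₗ[ℂ] ℂ) : Prop :=
  φ ≠ 0 ∧ ∀ a b : A, φ (a * b) = φ a * φ b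

/-- `(U, e)` is a realization of the Banach algebra `UP(I, A)` of upper triangular `I × I`
matrices over `A` with finite `ℓ¹`-norm: `e i j a` is the matrix with entry `a` in position
`(i,j)` (for `i ≤ j`; positions with `i > j` are zero), multiplication is matrix
multiplication, finite sums of entries have the `ℓ¹`-norm, and such matrices are dense. -/
def IsUpperTriangularL1 (I : Type) [LinearOrder I] (A : Type)
    [NonUnitalNormedRing A] [NormedSpace ℂ A]
    (U : Type) [NonUnitalNormedRing U] [NormedSpace ℂ U] (e : I → I → A → U) : Prop :=
  (∀ i j : I, IsLinearMap ℂ (e i j)) ∧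
  (∀ (i j : I) (a : A), ¬ i ≤ j → e i j a = 0) ∧
  (∀ i j k l : I, i ≤ j → k ≤ l → ∀ (a b : A),
      e i j a * e k l b = if j = k then e i l (a * b) else 0) ∧
  (∀ (s : Finset (I × I)) (f : I × I → A),
      ‖∑ p ∈ s, e p.1 p.2 (f p)‖ = ∑ p ∈ s.filter (fun p => p.1 ≤ p.2), ‖f p‖) ∧
  ((Submodule.span ℂ {u : U | ∃ i j a, i ≤ j ∧ u = e i j a}).topologicalClosure = ⊤)

/-!
The diagonal entry `θ = E_{ii}` of `UP(I, A)` extends from the `ℓ¹`-dense span of matrix units to a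
continuous multiplicative surjection onto `A`, and strong pseudo-amenability passes along such maps
by pulling the net back with `(θ ⊗ θ)*`; so `A` inherits it from `UP(I, A)`, and when `|I| = 1` the
corner embedding `a ↦ e i i a` is an inverse of `θ`. If `i < j`, the character gives the functionals
`ψ = φ ∘ E_{ii}` and `F = φ ∘ E_{ij}`, and `r = e i j c` with `φ c = 1` satisfies `F (x r) = ψ x`,
`ψ (r x) = 0`. For a strong pseudo-amenability net, `m_α (ψ ⊗ ψ)` is then `π**(m_α) r` evaluated
at `F`, which tends to `F r = 1`, and minus `(r m_α - m_α r)` evaluated at `ψ ⊗ F`, which tends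
to `0`.
-/

open Filter Topology

namespace DirSys

variable (D : DirSys)

def atTop : Filter D.ι := ⨅ i, 𝓟 {j | D.le i j}

theorem hasBasis_atTop : D.atTop.HasBasis (fun _ => True) fun i => {j | D.le i j} :=
  have := D.nonempty
  hasBasis_iInf_principal fun i j =>
    (D.directed i j).imp fun _ hk => ⟨fun _ h => D.trans hk.1 h, fun _ h => D.trans hk.2 h⟩

instance atTop_neBot : D.atTop.NeBot :=
  D.hasBasis_atTop.neBot_iff.2 fun {i} _ => ⟨i, D.refl i⟩

variable {D} {X Y : Type*} [PseudoMetricSpace X] [PseudoMetricSpace Y] {m : D.ι → X} {x : X}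

theorem tendsto_iff_tendsto_atTop : D.Tendsto m x ↔ Filter.Tendsto m D.atTop (𝓝 x) := by
  rw [D.hasBasis_atTop.tendsto_iff Metric.nhds_basis_ball]
  simp [DirSys.Tendsto]

theorem Tendsto.map (h : D.Tendsto m x) {f : X → Y} (hf : Continuous f) :
    D.Tendsto (fun i => f (m i)) (f x) :=
  tendsto_iff_tendsto_atTop.2 <| (hf.tendsto x).comp (tendsto_iff_tendsto_atTop.1 h)

theorem Tendsto.unique {X : Type*} [MetricSpace X] {m : D.ι → X} {x y : X}
    (hx : D.Tendsto m x) (hy : D.Tendsto m y) : x = y :=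
  tendsto_nhds_unique (tendsto_iff_tendsto_atTop.1 hx) (tendsto_iff_tendsto_atTop.1 hy)

theorem Tendsto.comp_clm {E F G : Type*} [SeminormedAddCommGroup E]
    [NormedSpace ℂ E] [SeminormedAddCommGroup F] [NormedSpace ℂ F] [SeminormedAddCommGroup G]
    [NormedSpace ℂ G] {m : D.ι → F →L[ℂ] G} {x : F →L[ℂ] G} (h : D.Tendsto m x) (T : E →L[ℂ] F) :
    D.Tendsto (fun i => (m i).comp T) (x.comp T) :=
  h.map (continuous_id.clm_comp continuous_const)

end DirSys

theorem IsCharacter.norm_apply_le {A : Type} [NonUnitalNormedRing A] [NormedSpace ℂ A]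
    [CompleteSpace A] {φ : A →ₗ[ℂ] ℂ} (hφ : IsCharacter A φ) (a : A) : ‖φ a‖ ≤ ‖a‖ := by
  by_contra! h
  have hφa : φ a ≠ 0 := by
    rintro h0
    simp [h0, not_lt.2 (norm_nonneg a)] at h
  set b : A := (φ a)⁻¹ • a
  have hφb : φ b = 1 := by simp [b, hφa]
  have hb : ‖b‖₊ < 1 := by
    rw [← NNReal.coe_lt_coe, coe_nnnorm, NNReal.coe_one, norm_smul, norm_inv,
      inv_mul_lt_one₀ (norm_pos_iff.2 hφa)]
    exact h
  -- the fixed point of `x ↦ b + b x` would satisfy `φ c = 1 + φ c`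
  have hcon : ContractingWith ‖b‖₊ fun x : A => b + b * x := by
    refine ⟨hb, LipschitzWith.of_dist_le_mul fun x y => ?_⟩
    simpa only [dist_eq_norm, add_sub_add_left_eq_sub, ← mul_sub, coe_nnnorm] using
      norm_mul_le b (x - y)
  have : Nonempty A := ⟨0⟩
  have hc := congrArg φ hcon.fixedPoint_isFixedPt
  rw [map_add, hφ.2, hφb, one_mul] at hc
  simp at hc

theorem IsCharacter.exists_apply_eq_one {A : Type} [NonUnitalNormedRing A] [NormedSpace ℂ A]
    {φ : A →ₗ[ℂ] ℂ} (hφ : IsCharacter A φ) : ∃ c, φ c = 1 := by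
  obtain ⟨a, ha⟩ : ∃ a, φ a ≠ 0 := by
    by_contra! h
    exact hφ.1 (LinearMap.ext h)
  exact ⟨(φ a)⁻¹ • a, by simp [ha]⟩

open ContinuousLinearMap

section Pullback

variable {U A : Type*} [NonUnitalNormedRing U] [NormedSpace ℂ U] [IsScalarTower ℂ U U]
  [SMulCommClass ℂ U U] [NonUnitalNormedRing A] [NormedSpace ℂ A] [IsScalarTower ℂ A A]
  [SMulCommClass ℂ A A]

-- `θ*` and `(θ ⊗ θ)*`; precomposing with them gives `θ**` and `(θ ⊗ θ)**`.
noncomputable def dualPullback (θ : U →L[ℂ] A) : NormedSpace.Dual ℂ A →L[ℂ] NormedSpace.Dual ℂ U :=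
  (compL ℂ U A ℂ).flip θ

noncomputable def bilPullback (θ : U →L[ℂ] A) : BilForms A →L[ℂ] BilForms U :=
  (compL ℂ U (NormedSpace.Dual ℂ A) (NormedSpace.Dual ℂ U) (dualPullback θ)).comp
    ((compL ℂ U A (NormedSpace.Dual ℂ A)).flip θ)

variable {θ : U →L[ℂ] A}

theorem tsmulL_comp_bilPullback (hθ : ∀ x y, θ (x * y) = θ x * θ y) (u : U) (m : TensorBidual U) :
    tsmulL (θ u) (m.comp (bilPullback θ)) = (tsmulL u m).comp (bilPullback θ) := by
  ext B
  show m (bilPullback θ (leftBil A (θ u) B)) = m (leftBil U u (bilPullback θ B))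
  congr 1
  ext x y
  show B (θ u * θ x) (θ y) = B (θ (u * x)) (θ y)
  rw [hθ]

theorem tsmulR_comp_bilPullback (hθ : ∀ x y, θ (x * y) = θ x * θ y) (u : U) (m : TensorBidual U) :
    tsmulR (θ u) (m.comp (bilPullback θ)) = (tsmulR u m).comp (bilPullback θ) := by
  ext B
  show m (bilPullback θ (rightBil A (θ u) B)) = m (rightBil U u (bilPullback θ B))
  congr 1
  ext x y
  show B (θ x) (θ y * θ u) = B (θ x) (θ (y * u))
  rw [hθ]

theorem piSS_comp_bilPullback (hθ : ∀ x y, θ (x * y) = θ x * θ y) (m : TensorBidual U) :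
    piSS (m.comp (bilPullback θ)) = (piSS m).comp (dualPullback θ) := by
  ext f
  show m (bilPullback θ (piStar A f)) = m (piStar U (dualPullback θ f))
  congr 1
  ext x y
  show f (θ x * θ y) = f (θ (x * y))
  rw [hθ]

theorem bsmulL_comp_dualPullback (hθ : ∀ x y, θ (x * y) = θ x * θ y) (u : U) (Φ : Bidual U) :
    bsmulL (θ u) (Φ.comp (dualPullback θ)) = (bsmulL u Φ).comp (dualPullback θ) := by
  ext f
  show Φ (dualPullback θ (dualROp A (θ u) f)) = Φ (dualROp U u (dualPullback θ f))
  congr 1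
  ext x
  show f (θ u * θ x) = f (θ (u * x))
  rw [hθ]

theorem bsmulR_comp_dualPullback (hθ : ∀ x y, θ (x * y) = θ x * θ y) (u : U) (Φ : Bidual U) :
    bsmulR (θ u) (Φ.comp (dualPullback θ)) = (bsmulR u Φ).comp (dualPullback θ) := by
  ext f
  show Φ (dualPullback θ (dualLOp A (θ u) f)) = Φ (dualLOp U u (dualPullback θ f))
  congr 1
  ext x
  show f (θ x * θ u) = f (θ (x * u))
  rw [hθ]

end Pullback

theorem StrongPseudoAmenable.of_surjective {U A : Type*} [NonUnitalNormedRing U]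
    [NormedSpace ℂ U] [IsScalarTower ℂ U U] [SMulCommClass ℂ U U] [NonUnitalNormedRing A]
    [NormedSpace ℂ A] [IsScalarTower ℂ A A] [SMulCommClass ℂ A A] {θ : U →L[ℂ] A}
    (hθ : ∀ x y, θ (x * y) = θ x * θ y) (hsurj : Function.Surjective θ)
    (hU : StrongPseudoAmenable U) : StrongPseudoAmenable A := by
  obtain ⟨D, m, hdiag, hcomm, hunit⟩ := hU
  refine ⟨D, fun α => (m α).comp (bilPullback θ), fun a => ?_, fun a α => ?_, fun a => ?_⟩ <;>
    obtain ⟨u, rfl⟩ := hsurj a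
  · have h := (hdiag u).comp_clm (E := BilForms A) (bilPullback θ)
    rw [zero_comp] at h
    convert h using 2 with α
    rw [tsmulL_comp_bilPullback hθ, tsmulR_comp_bilPullback hθ, sub_comp]
  · rw [piSS_comp_bilPullback hθ, bsmulL_comp_dualPullback hθ, bsmulR_comp_dualPullback hθ,
      hcomm]
  · have h := (hunit u).comp_clm (E := NormedSpace.Dual ℂ A) (dualPullback θ)
    convert h using 2 with α
    · rw [piSS_comp_bilPullback hθ, bsmulR_comp_dualPullback hθ]
    · rfl

theorem StrongPseudoAmenable.apply_eq_zero_of_apply_mul_eq {U : Type*} [NonUnitalNormedRing U]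
    [NormedSpace ℂ U] [IsScalarTower ℂ U U] [SMulCommClass ℂ U U] (hU : StrongPseudoAmenable U)
    {ψ F : NormedSpace.Dual ℂ U} (hψ : ∀ x y, ψ (x * y) = ψ x * ψ y) {r : U}
    (hψr : ∀ x, ψ (r * x) = 0) (hFr : ∀ x, F (x * r) = ψ x) : F r = 0 := by
  obtain ⟨D, m, hdiag, -, hunit⟩ := hU
  -- evaluating `π**(m_α)·r` at `F` and `r·m_α − m_α·r` at `ψ ⊗ F` both give `± m_α (ψ ⊗ ψ)`
  have hpi : piStar U (dualLOp U r F) = ψ.smulRight ψ := by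
    ext x y
    show F (x * y * r) = ψ x • ψ y
    rw [hFr, hψ, smul_eq_mul]
  have hleft : leftBil U r (ψ.smulRight F) = 0 := by
    ext x y
    show ψ (r * x) • F y = 0
    rw [hψr, zero_smul]
  have hright : rightBil U r (ψ.smulRight F) = ψ.smulRight ψ := by
    ext x y
    show ψ x • F (y * r) = ψ x • ψ y
    rw [hFr]
  have hlim₁ : D.Tendsto (fun α => m α (ψ.smulRight ψ)) (F r) := by
    have h := (hunit r).map (continuous_eval_const F)
    simp only [bsmulR, piSS, comp_apply, hpi] at h
    exact h
  have hlim₀ : D.Tendsto (fun α => m α (ψ.smulRight ψ)) 0 := by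
    simpa [tsmulL, tsmulR, hleft, hright] using
      ((hdiag r).map (continuous_eval_const (ψ.smulRight F))).map continuous_neg
  exact hlim₁.unique hlim₀

namespace IsUpperTriangularL1

variable {I : Type} [LinearOrder I] {A : Type} [NonUnitalNormedRing A] [NormedSpace ℂ A]
  {U : Type} [NonUnitalNormedRing U] [NormedSpace ℂ U] {e : I → I → A → U}

theorem ext_clm (hU : IsUpperTriangularL1 I A U e) {X : Type*} [NormedAddCommGroup X]
    [NormedSpace ℂ X] {f g : U →L[ℂ] X} (h : ∀ i j a, i ≤ j → f (e i j a) = g (e i j a)) :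
    f = g :=
  ContinuousLinearMap.ext_on (Submodule.dense_iff_topologicalClosure_eq_top.2 hU.2.2.2.2)
    fun _ ⟨i, j, a, hij, hu⟩ => hu ▸ h i j a hij

theorem map_mul_of_map_mul_generators [IsScalarTower ℂ U U] [SMulCommClass ℂ U U]
    (hU : IsUpperTriangularL1 I A U e) {B : Type*} [NonUnitalNormedRing B] [NormedSpace ℂ B]
    [IsScalarTower ℂ B B] [SMulCommClass ℂ B B] {θ : U →L[ℂ] B}
    (h : ∀ i j k l a b, i ≤ j → k ≤ l → θ (e i j a * e k l b) = θ (e i j a) * θ (e k l b))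
    (x y : U) : θ (x * y) = θ x * θ y := by
  have key : (compL ℂ U U B θ).comp (mul ℂ U) = (mul ℂ B).bilinearComp θ θ :=
    hU.ext_clm fun i j a hij => hU.ext_clm fun k l b hkl => h i j k l a b hij hkl
  exact congr($key x y)

theorem exists_entry_clm [CompleteSpace A] (hU : IsUpperTriangularL1 I A U e) {i₁ j₁ : I}
    (h : i₁ ≤ j₁) :
    ∃ E : U →L[ℂ] A, ∀ i j a, E (e i j a) = if i = i₁ ∧ j = j₁ then a else 0 := by
  classical
  let L : (I × I →₀ A) →ₗ[ℂ] U :=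
    Finsupp.lsum ℂ fun p => IsLinearMap.mk' (e p.1 p.2) (hU.1 p.1 p.2)
  have hL : ∀ p a, L (Finsupp.single p a) = e p.1 p.2 a := fun p a =>
    Finsupp.lsum_single ℂ _ p a
  have hdense : DenseRange L := by
    refine (Submodule.dense_iff_topologicalClosure_eq_top.2 hU.2.2.2.2).mono ?_
    rw [← LinearMap.coe_range, SetLike.coe_subset_coe, Submodule.span_le]
    rintro _ ⟨i, j, a, -, rfl⟩
    exact ⟨_, hL (i, j) a⟩
  have hbound : ∀ f, ‖Finsupp.lapply (R := ℂ) (i₁, j₁) f‖ ≤ 1 * ‖L f‖ := by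
    intro f
    rw [one_mul, show L f = ∑ p ∈ f.support, e p.1 p.2 (f p) from rfl, hU.2.2.2.1]
    by_cases hf : (i₁, j₁) ∈ f.support
    · exact Finset.single_le_sum (f := fun p => ‖f p‖) (fun _ _ => norm_nonneg _)
        (Finset.mem_filter.2 ⟨hf, h⟩)
    · simp [Finsupp.notMem_support_iff.1 hf, Finset.sum_nonneg]
  refine ⟨(Finsupp.lapply (R := ℂ) (i₁, j₁)).extendOfNorm L, fun i j a => ?_⟩
  by_cases hij : i ≤ j
  · rw [← hL (i, j), LinearMap.extendOfNorm_eq hdense ⟨1, hbound⟩]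
    simp [Finsupp.single_apply, Prod.ext_iff, eq_comm]
  · rw [hU.2.1 i j a hij, map_zero, if_neg]
    rintro ⟨rfl, rfl⟩
    exact hij h

section Algebra

variable [IsScalarTower ℂ A A] [SMulCommClass ℂ A A] [IsScalarTower ℂ U U] [SMulCommClass ℂ U U]

theorem map_mul_of_diag_entry (hU : IsUpperTriangularL1 I A U e) {i₁ : I} {θ : U →L[ℂ] A}
    (hθ : ∀ i j a, θ (e i j a) = if i = i₁ ∧ j = i₁ then a else 0) (x y : U) :
    θ (x * y) = θ x * θ y := by
  refine hU.map_mul_of_map_mul_generators (fun i j k l a b hij hkl => ?_) x y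
  rw [hU.2.2.1 i j k l hij hkl]
  by_cases hjk : j = k
  · subst hjk
    by_cases hi : i = i₁ <;> by_cases hl : l = i₁
    · -- `i ≤ j ≤ l` pins the middle index as well
      have hj : j = i₁ := le_antisymm (hl ▸ hkl) (hi ▸ hij)
      simp [hθ, hi, hj, hl]
    all_goals simp [hθ, hi, hl]
  · rw [if_neg hjk, map_zero, hθ, hθ]
    split_ifs with h₁ h₂ <;> try simp only [mul_zero, zero_mul]
    exact absurd (h₁.2.trans h₂.1.symm) hjk

theorem not_strongPseudoAmenable_of_lt [CompleteSpace A] (hU : IsUpperTriangularL1 I A U e)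
    {φ : A →ₗ[ℂ] ℂ} (hφ : IsCharacter A φ) {i₁ j₁ : I} (h : i₁ < j₁) :
    ¬ StrongPseudoAmenable U := by
  intro hspa
  obtain ⟨θ, hθ⟩ := hU.exists_entry_clm (le_refl i₁)
  obtain ⟨E, hE⟩ := hU.exists_entry_clm h.le
  obtain ⟨c, hc⟩ := hφ.exists_apply_eq_one
  let φc : A →L[ℂ] ℂ := φ.mkContinuous 1 fun a => by simpa using hφ.norm_apply_le a
  have hψ : ∀ x y, φc (θ (x * y)) = φc (θ x) * φc (θ y) := fun x y => by
    rw [hU.map_mul_of_diag_entry hθ]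
    exact hφ.2 _ _
  have hψr : (φc.comp θ).comp (mul ℂ U (e i₁ j₁ c)) = 0 := hU.ext_clm fun k l b hkl => by
    simp only [comp_apply, mul_apply', zero_apply, hU.2.2.1 _ _ _ _ h.le hkl]
    split_ifs with hjk
    · rw [hθ, if_neg fun h' : i₁ = i₁ ∧ l = i₁ => h.not_ge (h'.2 ▸ hjk ▸ hkl), map_zero]
    · rw [map_zero, map_zero]
  have hFr : (φc.comp E).comp ((mul ℂ U).flip (e i₁ j₁ c)) = φc.comp θ :=
    hU.ext_clm fun i j a hij => by
    simp only [comp_apply, flip_apply, mul_apply', hU.2.2.1 _ _ _ _ hij h.le]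
    split_ifs with hj
    · simp only [hE, hθ, hj, and_true]
      split_ifs <;> simp [φc, hφ.2, hc]
    · simp [hθ, hj]
  have := hspa.apply_eq_zero_of_apply_mul_eq (ψ := φc.comp θ) (F := φc.comp E) hψ
    (congr($hψr ·)) (congr($hFr ·))
  simp [φc, hE, hc] at this

theorem strongPseudoAmenable_of_subsingleton [CompleteSpace A]
    (hU : IsUpperTriangularL1 I A U e) (hI : ∀ i j : I, i = j) (i₀ : I)
    (hA : StrongPseudoAmenable A) : StrongPseudoAmenable U := by
  have hnorm : ∀ a, ‖e i₀ i₀ a‖ = ‖a‖ := fun a => by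
    simpa [Finset.filter_singleton] using hU.2.2.2.1 {(i₀, i₀)} fun _ => a
  let ι : A →L[ℂ] U :=
    (IsLinearMap.mk' (e i₀ i₀) (hU.1 i₀ i₀)).mkContinuous 1 fun a => by simp [hnorm]
  obtain ⟨θ, hθ⟩ := hU.exists_entry_clm (le_refl i₀)
  have hιθ : ι.comp θ = .id ℂ U := hU.ext_clm fun i j a _ => by
    obtain ⟨rfl, rfl⟩ : i = i₀ ∧ j = i₀ := ⟨hI i i₀, hI j i₀⟩
    simp [ι, hθ]
  refine hA.of_surjective (θ := ι) (fun a b => ?_) fun u => ⟨θ u, congr($hιθ u)⟩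
  simp [ι, hU.2.2.1 i₀ i₀ i₀ i₀ le_rfl le_rfl]

end Algebra

end IsUpperTriangularL1

theorem strongPseudoAmenable_upperTriangular_iff_general
    (I : Type) [LinearOrder I] (i₀ : I)
    (A : Type) [NonUnitalNormedRing A] [NormedSpace ℂ A] [IsScalarTower ℂ A A]
    [SMulCommClass ℂ A A] [CompleteSpace A]
    (φ : A →ₗ[ℂ] ℂ) (hφ : IsCharacter A φ)
    (U : Type) [NonUnitalNormedRing U] [NormedSpace ℂ U] [IsScalarTower ℂ U U]
    [SMulCommClass ℂ U U]
    (e : I → I → A → U) (hU : IsUpperTriangularL1 I A U e) :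
    StrongPseudoAmenable U ↔ (StrongPseudoAmenable A ∧ ∀ i j : I, i = j) := by
  refine ⟨fun h => ⟨?_, fun i j => ?_⟩, fun ⟨hA, hI⟩ =>
    hU.strongPseudoAmenable_of_subsingleton hI i₀ hA⟩
  · obtain ⟨θ, hθ⟩ := hU.exists_entry_clm (le_refl i₀)
    exact h.of_surjective (hU.map_mul_of_diag_entry hθ) fun a => ⟨e i₀ i₀ a, by simp [hθ]⟩
  · by_contra hij
    rcases lt_or_gt_of_ne hij with hlt | hlt <;> exact hU.not_strongPseudoAmenable_of_lt hφ hlt h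

/-- Let `I` be a totally ordered set with a smallest element and let `A`
be a Banach algebra admitting a character `φ`.  Then `UP(I, A)` is strong pseudo-amenable
if and only if `A` is strong pseudo-amenable and `|I| = 1`. -/
theorem strongPseudoAmenable_upperTriangular_iff
    (I : Type) [LinearOrder I] (i₀ : I) (hi₀ : ∀ i : I, i₀ ≤ i)
    (A : Type) [NonUnitalNormedRing A] [NormedSpace ℂ A] [IsScalarTower ℂ A A]
    [SMulCommClass ℂ A A] [CompleteSpace A]
    (φ : A →ₗ[ℂ] ℂ) (hφ : IsCharacter A φ)
    (U : Type) [NonUnitalNormedRing U] [NormedSpace ℂ U] [IsScalarTower ℂ U U]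
    [SMulCommClass ℂ U U] [CompleteSpace U]
    (e : I → I → A → U) (hU : IsUpperTriangularL1 I A U e) :
    StrongPseudoAmenable U ↔ (StrongPseudoAmenable A ∧ ∀ i j : I, i = j) :=
  strongPseudoAmenable_upperTriangular_iff_general I i₀ A φ hφ U e hU
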